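/- arXiv:0909.5408 — 4 statements merged into one kernel-verified Lean document; each statement's English description precedes it below -/
import Mathlib

section
/- Let K = ℂ(λ) be the field of rational functions over ℂ in the variable λ. There is no triple (a, b, z₁) ∈ K³ such that, with z₂ := z₁³ + a·z₁ + b, one has z₂ ≠ z₁, z₂³ + a·z₂ + b = z₁, and (3z₁² + a)(3z₂² + a) = λ. (There are no multiplier sections of period 2.) -/
/-!
Subtracting the two period-two equations and cancelling `z₁ - z₂ ≠ 0` gives
`z₁² + z₁z₂ + z₂² + a + 1 = 0`. Eliminating `a` with it, the multiplier condition becomes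
`4λ = (w² - 2)² - y²` with `w = z₁ - z₂` and `y = 3(z₁² - z₂²)`, so it suffices that
`(w² - 2)² - 4λ` is never a square in `k(λ)`.

Writing `w = P/Q` in lowest terms, integral closedness of `k[λ]` turns a square root into a
polynomial solution of `R² = P⁴ - 4P²Q² + (4 - 4λ)Q⁴`, an instance of
`κ P² = α A⁴ + β A²B² + N B⁴` with constants `κ, α ≠ 0`, `N` linear and `A, B` coprime.
Such a solution forces `deg B < deg A`, since otherwise the right side has odd degree. On the
other hand `(2αA² + βB²)² - 4ακP² = (β² - 4αN)B⁴` splits into two coprime factors, one of which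
absorbs the linear prime `β² - 4αN`; both are then constants times fourth powers `S⁴`, `T⁴`, and
`A` solves an equation of the same shape in `S, T` with `deg S + deg T = deg B`. This is an
infinite descent on `deg B`.
-/

open Polynomial

theorem isCoprime_sub_add_of_mul_eq_mul_pow_four {R : Type*} [CommRing R] [IsDomain R]
    [IsPrincipalIdealRing R] {M Q L B : R} (h2 : IsUnit (2 : R)) (hMB : IsCoprime M B)
    (hL : Squarefree L) (h : (M - Q) * (M + Q) = L * B ^ 4) :
    IsCoprime (M - Q) (M + Q) := by
  have h2M : (M - Q) + (M + Q) = 2 * M := by ring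
  refine isCoprime_of_prime_dvd ?_ fun π hπ h₁ h₂ => ?_
  · rintro ⟨h₁, h₂⟩
    have hM : M = 0 := by simpa [h₁, h₂, h2.ne_zero] using h2M
    have hB : IsUnit (B ^ 4) := (isCoprime_zero_left.mp (hM ▸ hMB)).pow 4
    exact hL.ne_zero (by simpa [h₁, hB.ne_zero] using h)
  · have hπM : π ∣ M := h2.dvd_mul_left.mp (h2M ▸ dvd_add h₁ h₂)
    have hπB : ¬ π ∣ B ^ 4 := fun hB =>
      hπ.not_isUnit (hMB.isUnit_of_dvd' hπM (hπ.dvd_of_dvd_pow hB))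
    have hπL : π ^ 2 ∣ L := hπ.pow_dvd_of_dvd_mul_right 2 hπB (h ▸ pow_two π ▸ mul_dvd_mul h₁ h₂)
    exact hπ.not_isUnit (hL π (pow_two π ▸ hπL))

section

variable {k : Type*} [Field k]

theorem exists_eq_C_mul_pow_of_isCoprime_of_mul_eq_pow {F G D : k[X]} {n : ℕ}
    (hFG : IsCoprime F G) (h : F * G = D ^ n) : ∃ (δ : k) (S : k[X]), δ ≠ 0 ∧ F = C δ * S ^ n := by
  obtain ⟨S, u, hu⟩ := exists_associated_pow_of_mul_eq_pow' hFG h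
  obtain ⟨δ, hδ, hC⟩ := Polynomial.isUnit_iff.mp u.isUnit
  exact ⟨δ, S, hδ.ne_zero, by rw [← hu, ← hC, mul_comm]⟩

theorem exists_sq_eq_C_mul_sq_of_pow_four_eq [IsAlgClosed k] {B D : k[X]} {c : k}
    (h : B ^ 4 = C c * D ^ 4) : ∃ θ : k, B ^ 2 = C θ * D ^ 2 := by
  obtain ⟨e, rfl⟩ := IsAlgClosed.exists_pow_nat_eq c two_pos
  have : (B ^ 2) ^ 2 = (C e * D ^ 2) ^ 2 := by rw [← pow_mul, h, map_pow]; ring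
  rcases sq_eq_sq_iff_eq_or_eq_neg.mp this with h | h
  · exact ⟨e, h⟩
  · exact ⟨-e, by rw [h, map_neg]; ring⟩

theorem natDegree_lt_of_C_mul_sq_eq_quartic {κ α β : k} {N P A B : k[X]} (hκ : κ ≠ 0)
    (hN : N.natDegree = 1) (hB : B ≠ 0)
    (h : C κ * P ^ 2 = C α * A ^ 4 + C β * A ^ 2 * B ^ 2 + N * B ^ 4) :
    B.natDegree < A.natDegree := by
  by_contra! hAB
  have h₁ : (C α * A ^ 4).natDegree ≤ 4 * B.natDegree :=
    (natDegree_C_mul_le _ _).trans (by rw [natDegree_pow]; omega)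
  have h₂ : (C β * A ^ 2 * B ^ 2).natDegree ≤ 4 * B.natDegree := by
    have := natDegree_C_mul_le β (A ^ 2)
    rw [natDegree_pow] at this
    exact natDegree_mul_le.trans (by rw [natDegree_pow]; omega)
  have hNB : (N * B ^ 4).natDegree = 1 + 4 * B.natDegree := by
    rw [natDegree_mul (by rintro rfl; simp at hN) (pow_ne_zero _ hB), natDegree_pow, hN]
  have hdeg := congrArg natDegree h
  rw [natDegree_add_eq_right_of_natDegree_lt (hNB ▸ (natDegree_add_le_of_degree_le h₁ h₂).trans_lt
    (by omega)), hNB, natDegree_C_mul hκ, natDegree_pow] at hdeg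
  omega

theorem exists_C_mul_pow_four_of_mul_eq_mul_pow_four [NeZero (2 : k)] {M Q L B : k[X]}
    (hMB : IsCoprime M B) (hL : Irreducible L) (h : (M - Q) * (M + Q) = L * B ^ 4)
    (hLdvd : L ∣ M + Q) :
    ∃ (δ δ' : k) (S T : k[X]), δ ≠ 0 ∧ δ' ≠ 0 ∧ IsCoprime S T ∧ M - Q = C δ * S ^ 4 ∧
      M + Q = C δ' * L * T ^ 4 ∧ B ^ 4 = C (δ * δ') * (S * T) ^ 4 := by
  obtain ⟨G, hG⟩ := hLdvd
  have hcop := isCoprime_sub_add_of_mul_eq_mul_pow_four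
    (map_ofNat (C : k →+* k[X]) 2 ▸ isUnit_C.mpr (isUnit_iff_ne_zero.mpr two_ne_zero)) hMB
    hL.squarefree h
  rw [hG] at hcop
  replace hcop := hcop.of_mul_right_right
  have hFG : (M - Q) * G = B ^ 4 := mul_left_cancel₀ hL.ne_zero (by rw [← h, hG]; ring)
  obtain ⟨δ, S, hδ, hS⟩ := exists_eq_C_mul_pow_of_isCoprime_of_mul_eq_pow hcop hFG
  obtain ⟨δ', T, hδ', hT⟩ :=
    exists_eq_C_mul_pow_of_isCoprime_of_mul_eq_pow hcop.symm ((mul_comm _ _).trans hFG)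
  refine ⟨δ, δ', S, T, hδ, hδ', ?_, hS, by rw [hG, hT]; ring, by rw [← hFG, hS, hT, map_mul]; ring⟩
  rw [hS, hT] at hcop
  exact (IsCoprime.pow_iff four_pos four_pos).mp
    ((isCoprime_mul_units_left (isUnit_C.mpr (isUnit_iff_ne_zero.mpr hδ))
      (isUnit_C.mpr (isUnit_iff_ne_zero.mpr hδ')) _ _).mp hcop)

variable [IsAlgClosed k] [NeZero (2 : k)]

theorem exists_descent_of_C_mul_sq_eq_quartic {κ α β : k} {N P A B : k[X]}
    (hα : α ≠ 0) (hN : N.natDegree = 1) (hB : B ≠ 0) (hAB : IsCoprime A B)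
    (h : C κ * P ^ 2 = C α * A ^ 4 + C β * A ^ 2 * B ^ 2 + N * B ^ 4) :
    ∃ (κ' α' β' : k) (N' S T : k[X]), κ' ≠ 0 ∧ α' ≠ 0 ∧ N'.natDegree = 1 ∧ T ≠ 0 ∧
      IsCoprime S T ∧ C κ' * A ^ 2 = C α' * S ^ 4 + C β' * S ^ 2 * T ^ 2 + N' * T ^ 4 ∧
      S.natDegree + T.natDegree = B.natDegree := by
  set M := C (2 * α) * A ^ 2 + C β * B ^ 2 with hM
  set L := C (β ^ 2) - C (4 * α) * N with hLdef
  have h4α : 4 * α ≠ 0 := by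
    rw [show (4 : k) = 2 * 2 by norm_num]
    exact mul_ne_zero (mul_ne_zero two_ne_zero two_ne_zero) hα
  have hL : L.natDegree = 1 := by
    rw [hLdef, sub_eq_add_neg, ← neg_mul, ← map_neg, add_comm, natDegree_add_C,
      natDegree_C_mul (neg_ne_zero.mpr h4α), hN]
  have hLirr : Irreducible L :=
    irreducible_of_degree_eq_one ((degree_eq_iff_natDegree_eq_of_pos one_pos).mpr hL)
  have hMB : IsCoprime M B := by
    have h2α : IsUnit (C (2 * α)) :=
      isUnit_C.mpr (isUnit_iff_ne_zero.mpr (mul_ne_zero two_ne_zero hα))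
    rw [show M = C (2 * α) * A ^ 2 + (C β * B) * B by rw [hM]; ring]
    exact ((isCoprime_mul_unit_left_left h2α _ _).mpr (hAB.pow_left (m := 2))).add_mul_right_left _
  have hprod (γ : k) (hγ : γ ^ 2 = α * κ) :
      (M - C γ * (2 * P)) * (M + C γ * (2 * P)) = L * B ^ 4 := by
    have hγC := congrArg C hγ
    simp only [hM, hLdef, map_mul, map_pow, map_ofNat] at hγC ⊢
    linear_combination (-4 * C α) * h - 4 * P ^ 2 * hγC
  -- the sign of the square root of `α κ` is chosen so that `L` divides the second factor
  obtain ⟨γ, hγ, hLdvd⟩ : ∃ γ : k, γ ^ 2 = α * κ ∧ L ∣ M + C γ * (2 * P) := by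
    obtain ⟨γ, hγ⟩ := IsAlgClosed.exists_pow_nat_eq (α * κ) two_pos
    rcases hLirr.prime.dvd_or_dvd (Dvd.intro _ (hprod γ hγ).symm) with hd | hd
    · exact ⟨-γ, by rw [neg_sq, hγ], by simpa [sub_eq_add_neg] using hd⟩
    · exact ⟨γ, hγ, hd⟩
  obtain ⟨δ, δ', S, T, hδ, hδ', hST, hS, hT, hB4⟩ :=
    exists_C_mul_pow_four_of_mul_eq_mul_pow_four hMB hLirr (hprod γ hγ) hLdvd
  obtain ⟨θ, hθ⟩ := exists_sq_eq_C_mul_sq_of_pow_four_eq hB4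
  have hST0 : S * T ≠ 0 := by
    rintro hST0
    rw [hST0, zero_pow four_ne_zero, mul_zero] at hB4
    exact pow_ne_zero 4 hB hB4
  refine ⟨4 * α, δ, -(2 * β * θ), C δ' * L, S, T, h4α, hδ, by rw [natDegree_C_mul hδ', hL],
    right_ne_zero_of_mul hST0, hST, ?_, ?_⟩
  · simp only [hM, map_mul, map_neg, map_ofNat] at hS hT hθ ⊢
    linear_combination hS + hT - 2 * C β * hθ
  · have hdeg := congrArg natDegree hB4
    rw [natDegree_C_mul (mul_ne_zero hδ hδ'), natDegree_pow, natDegree_pow,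
      natDegree_mul (left_ne_zero_of_mul hST0) (right_ne_zero_of_mul hST0)] at hdeg
    omega

theorem C_mul_sq_ne_quartic {κ α β : k} {N P A B : k[X]} (hκ : κ ≠ 0) (hα : α ≠ 0)
    (hN : N.natDegree = 1) (hB : B ≠ 0) (hAB : IsCoprime A B) :
    C κ * P ^ 2 ≠ C α * A ^ 4 + C β * A ^ 2 * B ^ 2 + N * B ^ 4 := by
  induction hn : B.natDegree using Nat.strong_induction_on generalizing κ α β N P A B with
  | _ n ih =>
  intro h
  obtain ⟨κ', α', β', N', S, T, hκ', hα', hN', hT, hST, h', hdeg⟩ :=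
    exists_descent_of_C_mul_sq_eq_quartic hα hN hB hAB h
  have hTS := natDegree_lt_of_C_mul_sq_eq_quartic hκ' hN' hT h'
  exact ih T.natDegree (by omega) hκ' hα' hN' hT hST rfl h'

theorem not_isSquare_sq_sub_two_sq_sub_four_X (w : RatFunc k) :
    ¬ IsSquare ((w ^ 2 - 2) ^ 2 - 4 * RatFunc.X) := by
  rintro ⟨y, hy⟩
  set φ := algebraMap k[X] (RatFunc k)
  have hw : φ w.num = w * φ w.denom :=
    (div_eq_iff (RatFunc.algebraMap_ne_zero w.denom_ne_zero)).mp (RatFunc.num_div_denom w)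
  set d : k[X] := (w.num ^ 2 - 2 * w.denom ^ 2) ^ 2 - 4 * X * w.denom ^ 4
  have hd : (y * φ (w.denom ^ 2)) ^ 2 = φ d := by
    have hX : φ X = RatFunc.X := RatFunc.algebraMap_X
    simp only [d, map_sub, map_mul, map_pow, map_ofNat, hX, hw]
    linear_combination -(φ w.denom) ^ 4 * hy
  obtain ⟨R, hR⟩ := IsIntegrallyClosed.exists_algebraMap_eq_of_isIntegral_pow two_pos
    (hd ▸ isIntegral_algebraMap)
  have hRd : R ^ 2 = d := IsFractionRing.injective k[X] (RatFunc k) (by rw [map_pow, hR, hd])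
  refine C_mul_sq_ne_quartic (κ := 1) (α := 1) (β := -4) (N := C 4 - C 4 * X) (P := R)
    one_ne_zero one_ne_zero ?_ w.denom_ne_zero w.isCoprime_num_denom ?_
  · have h4 : (4 : k) ≠ 0 := by
      rw [show (4 : k) = 2 * 2 by norm_num]
      exact mul_ne_zero two_ne_zero two_ne_zero
    rw [sub_eq_add_neg, ← neg_mul, ← map_neg, add_comm, natDegree_add_C,
      natDegree_C_mul_X _ (neg_ne_zero.mpr h4)]
  · simp only [map_one, one_mul, map_neg, map_ofNat, hRd, d]
    ring

end

/-- **There are no multiplier sections of period 2.**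
Over `K = ℂ(λ)`, there is no triple `(a, b, z₁) ∈ K³` such that, with
`z₂ := z₁³ + a·z₁ + b`, one has `z₂ ≠ z₁`, `z₂³ + a·z₂ + b = z₁`, and
`(3z₁² + a)(3z₂² + a) = λ`. -/
theorem no_period_two_multiplier_sections :
    ¬ ∃ a b z₁ : RatFunc ℂ,
        z₁ ^ 3 + a * z₁ + b ≠ z₁ ∧
        (z₁ ^ 3 + a * z₁ + b) ^ 3 + a * (z₁ ^ 3 + a * z₁ + b) + b = z₁ ∧
        (3 * z₁ ^ 2 + a) * (3 * (z₁ ^ 3 + a * z₁ + b) ^ 2 + a) = RatFunc.X := by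
  rintro ⟨a, b, z₁, hne, hper, hmul⟩
  set z₂ := z₁ ^ 3 + a * z₁ + b with hz₂
  have hsym : z₁ ^ 2 + z₁ * z₂ + z₂ ^ 2 + a + 1 = 0 := by
    have h : (z₁ - z₂) * (z₁ ^ 2 + z₁ * z₂ + z₂ ^ 2 + a + 1) = 0 := by
      linear_combination -hz₂ - hper
    exact (mul_eq_zero.mp h).resolve_left (sub_ne_zero.mpr hne.symm)
  refine not_isSquare_sq_sub_two_sq_sub_four_X (z₁ - z₂) ⟨3 * (z₁ ^ 2 - z₂ ^ 2), ?_⟩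
  linear_combination 4 * hmul - (8 * z₁ ^ 2 - 4 * z₁ * z₂ + 8 * z₂ ^ 2 + 4 * a - 4) * hsym
end

section
/- Let ℂ(w) be the field of rational functions over ℂ in the variable w. The set of triples (a, b, z₁) ∈ ℂ(w)³ such that, with z₂ := z₁³ + a·z₁ + b, one has z₂ ≠ z₁, z₂³ + a·z₂ + b = z₁, and (3z₁² + a)(3z₂² + a) = w¹², is infinite. (There are infinitely many 12th-root multiplier sections of period 2.) -/
/-!
A period-two orbit `z₁ ≠ z₂` of `z ↦ z³ + a z + b` forces `a = -1 - (z₁² + z₁ z₂ + z₂²)` and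
`b = (z₁ + z₂)(1 + z₁ z₂)`, and then `4 (3 z₁² + a)(3 z₂² + a) = (u² - 2)² - 9 σ² u²` with
`u = z₁ - z₂`, `σ = z₁ + z₂`. Writing `u = y / x` and `3 σ u = W / x - x`, the multiplier equals `W`
exactly when `(x, y)` lies on the elliptic curve `y² = x (x² + 2 x + W)`.

For `W = w¹²` this curve contains `A = (-W / 2, δ w¹⁸ / 4)`, where `δ² = -2`, and `A` has infinite
order. Indeed, in the coordinates `t = x / y`, `s = 1 / y` and for the place `w = ∞`, the points
with `t = c w⁻⁶ + o(w⁻⁶)` are closed under the chord construction, and the leading coefficient `c`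
is additive, because the chord corrects `t₁ + t₂` only by `O(w⁻¹⁸)`. Since `A` has leading
coefficient `δ`, the multiples `n A` with `n ≥ 2` have the distinct leading coefficients `n δ`. They
give distinct triples, because a triple determines `t = 1 / (z₁ - z₂)`.
-/

namespace PeriodTwoMultiplier

section PeriodTwo

variable {R : Type*} [CommRing R]

def cubicMap (a b z : R) : R := z ^ 3 + a * z + b

def periodTwoSections (W : R) : Set (R × R × R) :=
  {p | cubicMap p.1 p.2.1 p.2.2 ≠ p.2.2 ∧
    cubicMap p.1 p.2.1 (cubicMap p.1 p.2.1 p.2.2) = p.2.2 ∧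
    (3 * p.2.2 ^ 2 + p.1) * (3 * cubicMap p.1 p.2.1 p.2.2 ^ 2 + p.1) = W}

def periodTwoA (z₁ z₂ : R) : R := -1 - (z₁ ^ 2 + z₁ * z₂ + z₂ ^ 2)

def periodTwoB (z₁ z₂ : R) : R := (z₁ + z₂) * (1 + z₁ * z₂)

theorem periodTwoA_comm (z₁ z₂ : R) : periodTwoA z₁ z₂ = periodTwoA z₂ z₁ := by
  unfold periodTwoA; ring

theorem periodTwoB_comm (z₁ z₂ : R) : periodTwoB z₁ z₂ = periodTwoB z₂ z₁ := by
  unfold periodTwoB; ring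

theorem cubicMap_periodTwo (z₁ z₂ : R) :
    cubicMap (periodTwoA z₁ z₂) (periodTwoB z₁ z₂) z₁ = z₂ := by
  unfold cubicMap periodTwoA periodTwoB; ring

theorem four_mul_multiplier_periodTwo (z₁ z₂ : R) :
    4 * ((3 * z₁ ^ 2 + periodTwoA z₁ z₂) * (3 * z₂ ^ 2 + periodTwoA z₁ z₂)) =
      ((z₁ - z₂) ^ 2 - 2) ^ 2 - 9 * (z₁ + z₂) ^ 2 * (z₁ - z₂) ^ 2 := by
  unfold periodTwoA; ring

end PeriodTwo

section CurveAtInfty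

variable {K : Type*} [Field K]

theorem cubic_eval_third_root_eq_zero {D E F G r₁ r₂ r₃ : K} (hsum : D * (r₁ + r₂ + r₃) = -E)
    (h₁₂ : r₁ ≠ r₂) (h₁ : D * r₁ ^ 3 + E * r₁ ^ 2 + F * r₁ + G = 0)
    (h₂ : D * r₂ ^ 3 + E * r₂ ^ 2 + F * r₂ + G = 0) :
    D * r₃ ^ 3 + E * r₃ ^ 2 + F * r₃ + G = 0 := by
  set α := F - D * (r₁ * r₂ + r₁ * r₃ + r₂ * r₃)
  set β := G + D * r₁ * r₂ * r₃
  have factor (T : K) : D * T ^ 3 + E * T ^ 2 + F * T + G =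
      D * (T - r₁) * (T - r₂) * (T - r₃) + α * T + β := by
    linear_combination T ^ 2 * hsum
  have e₁ : α * r₁ + β = 0 := by linear_combination h₁ - factor r₁
  have e₂ : α * r₂ + β = 0 := by linear_combination h₂ - factor r₂
  have hα : α = 0 :=
    (mul_eq_zero.mp (by linear_combination e₁ - e₂ : α * (r₁ - r₂) = 0)).resolve_right
      (sub_ne_zero.mpr h₁₂)
  linear_combination factor r₃ + e₁ + (r₃ - r₁) * hα

/-- The curve `y² = x³ + a x² + b x` in the chart `t = x / y`, `s = 1 / y` at its point at
infinity, which becomes the origin; the group inverse is `P ↦ -P`. -/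
def OnCurveAtInfty (a b : K) (P : K × K) : Prop :=
  P.2 = P.1 ^ 3 + a * P.1 ^ 2 * P.2 + b * P.1 * P.2 ^ 2

theorem OnCurveAtInfty.neg {a b : K} {P : K × K} (h : OnCurveAtInfty a b P) :
    OnCurveAtInfty a b (-P) := by
  unfold OnCurveAtInfty at *
  simp only [Prod.fst_neg, Prod.snd_neg]
  linear_combination -h

theorem onCurveAtInfty_mul_of_sq_eq {a b d e : K} {P : K × K} (hd : d ^ 2 = e)
    (h : P.2 = e * (P.1 ^ 3 + a * P.1 ^ 2 * P.2 + b * P.1 * P.2 ^ 2)) :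
    OnCurveAtInfty a b (d * P.1, d * P.2) := by
  unfold OnCurveAtInfty
  linear_combination d * h - d * (P.1 ^ 3 + a * P.1 ^ 2 * P.2 + b * P.1 * P.2 ^ 2) * hd

theorem OnCurveAtInfty.snd_ne_zero {a b : K} {P : K × K} (hP : OnCurveAtInfty a b P)
    (ht : P.1 ≠ 0) : P.2 ≠ 0 := by
  intro hs
  rw [OnCurveAtInfty, hs] at hP
  exact ht (pow_eq_zero_iff three_ne_zero |>.mp (by linear_combination -hP))

def chartSlope (P Q : K × K) : K := (Q.2 - P.2) / (Q.1 - P.1)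

/-- The group sum `P + Q`: minus the third point of the curve on the chord `s = μ t + ν` through
`P` and `Q`, whose `t`-coordinate comes from Vieta's formula. -/
def chartAdd (a b : K) (P Q : K × K) : K × K :=
  let μ := chartSlope P Q
  let ν := P.2 - μ * P.1
  let t := P.1 + Q.1 + (a * ν + 2 * b * μ * ν) / (1 + a * μ + b * μ ^ 2)
  (t, μ * t - ν)

theorem OnCurveAtInfty.chartAdd {a b : K} {P Q : K × K} (hP : OnCurveAtInfty a b P)
    (hQ : OnCurveAtInfty a b Q) (hPQ : P.1 ≠ Q.1)
    (hD : 1 + a * chartSlope P Q + b * chartSlope P Q ^ 2 ≠ 0) :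
    OnCurveAtInfty a b (chartAdd a b P Q) := by
  set μ := chartSlope P Q
  set ν := P.2 - μ * P.1
  set D := 1 + a * μ + b * μ ^ 2
  set E := a * ν + 2 * b * μ * ν
  have hμ' : μ * (Q.1 - P.1) = Q.2 - P.2 := div_mul_cancel₀ _ (sub_ne_zero.mpr hPQ.symm)
  have cubic_of_onCurve {T : K} (hT : OnCurveAtInfty a b (T, μ * T + ν)) :
      D * T ^ 3 + E * T ^ 2 + (b * ν ^ 2 - μ) * T + -ν = 0 := by
    unfold OnCurveAtInfty at hT
    linear_combination -hT
  have hP' : P = (P.1, μ * P.1 + ν) := by ext <;> simp [ν]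
  have hQ' : Q = (Q.1, μ * Q.1 + ν) := Prod.ext rfl (by simp only [ν]; linear_combination -hμ')
  set r := -(P.1 + Q.1) - E / D
  have hr : OnCurveAtInfty a b (r, μ * r + ν) := by
    have hsum : D * (P.1 + Q.1 + r) = -E := by
      rw [show P.1 + Q.1 + r = -(E / D) by ring, mul_neg, mul_div_cancel₀ _ hD]
    have := cubic_eval_third_root_eq_zero hsum hPQ (cubic_of_onCurve (hP' ▸ hP))
      (cubic_of_onCurve (hQ' ▸ hQ))
    unfold OnCurveAtInfty
    linear_combination -this
  convert hr.neg using 1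
  ext <;> simp only [PeriodTwoMultiplier.chartAdd, Prod.fst_neg, Prod.snd_neg] <;> ring

end CurveAtInfty

section ChartTriple

variable {K : Type*} [Field K] [CharZero K]

/- For `x = t / s`, `y = 1 / s` on `y² = x (x² + 2 x + W)`, these give `z₁ - z₂ = y / x = 1 / t`
and `3 (z₁ + z₂)(z₁ - z₂) = W / x - x`. -/
def chartSum (W : K) (P : K × K) : K := (W * P.2 - P.1 ^ 2 / P.2) / 3

def chartZ₁ (W : K) (P : K × K) : K := (chartSum W P + P.1⁻¹) / 2

def chartZ₂ (W : K) (P : K × K) : K := (chartSum W P - P.1⁻¹) / 2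

theorem chartZ₁_sub_chartZ₂ (W : K) (P : K × K) : chartZ₁ W P - chartZ₂ W P = P.1⁻¹ := by
  unfold chartZ₁ chartZ₂; ring

theorem multiplier_chartZ_eq {W : K} {P : K × K} (hP : OnCurveAtInfty 2 W P) (ht : P.1 ≠ 0)
    (hs : P.2 ≠ 0) :
    (3 * chartZ₁ W P ^ 2 + periodTwoA (chartZ₁ W P) (chartZ₂ W P)) *
      (3 * chartZ₂ W P ^ 2 + periodTwoA (chartZ₁ W P) (chartZ₂ W P)) = W := by
  refine mul_left_cancel₀ (by norm_num : (4 : K) ≠ 0) ?_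
  rw [four_mul_multiplier_periodTwo, chartZ₁_sub_chartZ₂,
    show chartZ₁ W P + chartZ₂ W P = chartSum W P by unfold chartZ₁ chartZ₂; ring, chartSum]
  unfold OnCurveAtInfty at hP
  field_simp
  -- `hP` says `s (1 - 2 t²) = t (t² + W s²)`; the goal follows by squaring it.
  linear_combination 9 * (P.2 * (1 - 2 * P.1 ^ 2) + P.1 * (P.1 ^ 2 + W * P.2 ^ 2)) * hP

def chartTriple (W : K) (P : K × K) : K × K × K :=
  (periodTwoA (chartZ₁ W P) (chartZ₂ W P), periodTwoB (chartZ₁ W P) (chartZ₂ W P), chartZ₁ W P)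

theorem chartTriple_mem_periodTwoSections {W : K} {P : K × K} (hP : OnCurveAtInfty 2 W P)
    (ht : P.1 ≠ 0) : chartTriple W P ∈ periodTwoSections W := by
  have hz : chartZ₂ W P ≠ chartZ₁ W P := by
    rw [ne_comm, ← sub_ne_zero, chartZ₁_sub_chartZ₂]; exact inv_ne_zero ht
  refine ⟨?_, ?_, ?_⟩ <;> dsimp only [chartTriple] <;> rw [cubicMap_periodTwo]
  · exact hz
  · rw [periodTwoA_comm, periodTwoB_comm, cubicMap_periodTwo]
  · exact multiplier_chartZ_eq hP ht (hP.snd_ne_zero ht)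

theorem fst_eq_of_chartTriple_eq {W : K} {P Q : K × K} (h : chartTriple W P = chartTriple W Q) :
    P.1 = Q.1 := by
  have key (P : K × K) : (chartTriple W P).2.2 -
      cubicMap (chartTriple W P).1 (chartTriple W P).2.1 (chartTriple W P).2.2 = P.1⁻¹ := by
    simp only [chartTriple, cubicMap_periodTwo, chartZ₁_sub_chartZ₂]
  exact inv_injective (by rw [← key P, ← key Q, h])

end ChartTriple

section LeadingCoeff

variable {K Γ₀ : Type*} [Field K] [LinearOrderedCommGroupWithZero Γ₀]

/-- `t = c ϖ ^ k + o(ϖ ^ k)` and `s = O(ϖ ^ (3 k))`. -/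
def HasLeadingCoeff (v : Valuation K Γ₀) (ϖ : K) (k : ℕ) (c : K) (P : K × K) : Prop :=
  v (P.1 - c * ϖ ^ k) < v ϖ ^ k ∧ v P.2 ≤ v ϖ ^ (3 * k)

variable {v : Valuation K Γ₀} {ϖ : K} {k : ℕ} {c c₁ c₂ : K} {P P₁ P₂ : K × K}

theorem valuation_le_of_sub_lt {t : K} (h : v (t - c * ϖ ^ k) < v ϖ ^ k) (hc : v c ≤ 1) :
    v t ≤ v ϖ ^ k := by
  rw [← sub_add_cancel t (c * ϖ ^ k)]
  refine v.map_add_le h.le ?_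
  rw [map_mul, map_pow]
  exact mul_le_of_le_one_left' hc

namespace HasLeadingCoeff

theorem valuation_sub_fst (h₁ : HasLeadingCoeff v ϖ k c₁ P₁) (h₂ : HasLeadingCoeff v ϖ k c₂ P₂)
    (hc : v (c₂ - c₁) = 1) : v (P₂.1 - P₁.1) = v ϖ ^ k := by
  have hlead : v ((c₂ - c₁) * ϖ ^ k) = v ϖ ^ k := by rw [map_mul, hc, one_mul, map_pow]
  rw [show P₂.1 - P₁.1 = (c₂ - c₁) * ϖ ^ k + ((P₂.1 - c₂ * ϖ ^ k) - (P₁.1 - c₁ * ϖ ^ k)) by ring,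
    v.map_add_eq_of_lt_left (hlead ▸ v.map_sub_lt h₂.1 h₁.1), hlead]

theorem fst_ne (h₁ : HasLeadingCoeff v ϖ k c₁ P₁) (h₂ : HasLeadingCoeff v ϖ k c₂ P₂)
    (hc : v (c₂ - c₁) = 1) : P₁.1 ≠ P₂.1 := by
  rw [ne_comm, ← sub_ne_zero, ← v.ne_zero_iff, valuation_sub_fst h₁ h₂ hc]
  exact (zero_le.trans_lt h₁.1).ne'

theorem fst_ne_zero (h : HasLeadingCoeff v ϖ k c P) (hc : v c = 1) : P.1 ≠ 0 := by
  intro h0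
  have := h.1
  rw [h0, zero_sub, Valuation.map_neg, map_mul, hc, one_mul, map_pow] at this
  exact lt_irrefl _ this

theorem valuation_chartSlope_le (h₁ : HasLeadingCoeff v ϖ k c₁ P₁)
    (h₂ : HasLeadingCoeff v ϖ k c₂ P₂) (hc : v (c₂ - c₁) = 1) :
    v (chartSlope P₁ P₂) ≤ v ϖ ^ (2 * k) := by
  have hr : 0 < v ϖ ^ k := zero_le.trans_lt h₁.1
  rw [chartSlope, map_div₀, valuation_sub_fst h₁ h₂ hc, div_le_iff₀ hr, ← pow_add,
    show 2 * k + k = 3 * k by ring]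
  exact v.map_sub_le h₂.2 h₁.2

theorem valuation_chartIntercept_le (h₁ : HasLeadingCoeff v ϖ k c₁ P₁)
    (h₂ : HasLeadingCoeff v ϖ k c₂ P₂) (hc₁ : v c₁ ≤ 1) (hc : v (c₂ - c₁) = 1) :
    v (P₁.2 - chartSlope P₁ P₂ * P₁.1) ≤ v ϖ ^ (3 * k) := by
  refine v.map_sub_le h₁.2 ?_
  rw [map_mul, show 3 * k = 2 * k + k by ring, pow_add]
  exact mul_le_mul' (valuation_chartSlope_le h₁ h₂ hc) (valuation_le_of_sub_lt h₁.1 hc₁)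

variable {a b : K}

theorem valuation_chartDenom (hk : 0 < k) (hϖ : v ϖ < 1) (ha : v a ≤ 1)
    (hb : v b * v ϖ ^ (2 * k) ≤ 1) (h₁ : HasLeadingCoeff v ϖ k c₁ P₁)
    (h₂ : HasLeadingCoeff v ϖ k c₂ P₂) (hc : v (c₂ - c₁) = 1) :
    v (1 + a * chartSlope P₁ P₂ + b * chartSlope P₁ P₂ ^ 2) = 1 := by
  have hμ := valuation_chartSlope_le h₁ h₂ hc
  have hsmall : v ϖ ^ (2 * k) < 1 := pow_lt_one₀ zero_le hϖ (by omega)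
  rw [add_assoc]
  refine v.map_one_add_of_lt (v.map_add_lt ?_ ?_)
  · rw [map_mul]
    exact (mul_le_of_le_one_left' ha |>.trans hμ).trans_lt hsmall
  · calc v (b * chartSlope P₁ P₂ ^ 2)
        ≤ v b * (v ϖ ^ (2 * k) * v ϖ ^ (2 * k)) := by
          rw [map_mul, map_pow, sq]; gcongr
      _ ≤ v ϖ ^ (2 * k) := by rw [← mul_assoc]; exact mul_le_of_le_one_left' hb
      _ < 1 := hsmall

theorem chartAdd (hk : 0 < k) (hϖ : v ϖ < 1) (ha : v a ≤ 1)
    (hb : v b * v ϖ ^ (2 * k) ≤ 1) (h₁ : HasLeadingCoeff v ϖ k c₁ P₁)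
    (h₂ : HasLeadingCoeff v ϖ k c₂ P₂) (hc₁ : v c₁ ≤ 1) (hc₂ : v c₂ ≤ 1)
    (hc : v (c₂ - c₁) = 1) :
    HasLeadingCoeff v ϖ k (c₁ + c₂) (PeriodTwoMultiplier.chartAdd a b P₁ P₂) := by
  have hμ := valuation_chartSlope_le h₁ h₂ hc
  have hν := valuation_chartIntercept_le h₁ h₂ hc₁ hc
  have hD := valuation_chartDenom hk hϖ ha hb h₁ h₂ hc
  set μ := chartSlope P₁ P₂
  set ν := P₁.2 - μ * P₁.1
  have hE : v ((a * ν + 2 * b * μ * ν) / (1 + a * μ + b * μ ^ 2)) ≤ v ϖ ^ (3 * k) := by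
    rw [map_div₀, hD, div_one]
    refine v.map_add_le (by rw [map_mul]; exact mul_le_of_le_one_left' ha |>.trans hν) ?_
    rw [mul_assoc, mul_assoc, two_mul]
    refine v.map_add_le ?_ ?_ <;>
    · calc v (b * (μ * ν)) ≤ v b * (v ϖ ^ (2 * k) * v ϖ ^ (3 * k)) := by
            rw [map_mul, map_mul]; gcongr
        _ ≤ v ϖ ^ (3 * k) := by rw [← mul_assoc]; exact mul_le_of_le_one_left' hb
  set t := P₁.1 + P₂.1 + (a * ν + 2 * b * μ * ν) / (1 + a * μ + b * μ ^ 2)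
  have hlead : v (t - (c₁ + c₂) * ϖ ^ k) < v ϖ ^ k := by
    have hsmall : v ϖ ^ (3 * k) < v ϖ ^ k := by
      rw [show 3 * k = 2 * k + k by ring, pow_add]
      exact mul_lt_of_lt_one_left (zero_le.trans_lt h₁.1) (pow_lt_one₀ zero_le hϖ (by omega))
    rw [show t - (c₁ + c₂) * ϖ ^ k = (P₁.1 - c₁ * ϖ ^ k) + (P₂.1 - c₂ * ϖ ^ k) +
      (a * ν + 2 * b * μ * ν) / (1 + a * μ + b * μ ^ 2) by ring]
    exact v.map_add_lt (v.map_add_lt h₁.1 h₂.1) (hE.trans_lt hsmall)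
  refine ⟨hlead, v.map_sub_le ?_ hν⟩
  rw [map_mul, show 3 * k = 2 * k + k by ring, pow_add]
  exact mul_le_mul' hμ (valuation_le_of_sub_lt hlead (v.map_add_le hc₁ hc₂))

theorem onCurveAtInfty_chartAdd (hk : 0 < k) (hϖ : v ϖ < 1) (ha : v a ≤ 1)
    (hb : v b * v ϖ ^ (2 * k) ≤ 1) (h₁ : HasLeadingCoeff v ϖ k c₁ P₁)
    (h₂ : HasLeadingCoeff v ϖ k c₂ P₂) (hc : v (c₂ - c₁) = 1) (hP₁ : OnCurveAtInfty a b P₁)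
    (hP₂ : OnCurveAtInfty a b P₂) :
    OnCurveAtInfty a b (PeriodTwoMultiplier.chartAdd a b P₁ P₂) := by
  refine hP₁.chartAdd hP₂ (h₁.fst_ne h₂ hc) ?_
  rw [← v.ne_zero_iff, valuation_chartDenom hk hϖ ha hb h₁ h₂ hc]
  exact one_ne_zero

end HasLeadingCoeff

end LeadingCoeff

noncomputable section

open RatFunc

variable {F : Type*} [Field F] {δ : F}

/-- The point `(x, y) = (-W / 2, δ w¹⁸ / 4)` of `y² = x (x² + 2 x + W)`, `W = w¹²`. -/
def basePoint (δ : F) : RatFunc F × RatFunc F :=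
  (C δ * X⁻¹ ^ 6, C δ * (-2 * X⁻¹ ^ 18))

/-- Twice `basePoint`, obtained from the tangent line at `basePoint`. -/
def doubleBasePoint (δ : F) : RatFunc F × RatFunc F :=
  let z : RatFunc F := X⁻¹ ^ 12
  (C δ * (2 * X⁻¹ ^ 6 * (1 - 4 * z) / (1 + 16 * (1 - z) * z)),
    C δ * (-16 * X⁻¹ ^ 18 / ((1 - 4 * z) * (1 + 16 * (1 - z) * z))))

/-- `multipleBasePoint δ n = (n + 2) • basePoint δ`. -/
def multipleBasePoint (δ : F) : ℕ → RatFunc F × RatFunc F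
  | 0 => doubleBasePoint δ
  | n + 1 => chartAdd 2 (X ^ 12) (basePoint δ) (multipleBasePoint δ n)

theorem C_sq_eq_neg_two (hδ : δ ^ 2 = -2) : C δ ^ 2 = (-2 : RatFunc F) := by
  rw [← map_pow, hδ, map_neg, map_ofNat]

theorem ne_zero_of_sq_eq_neg_two [CharZero F] (hδ : δ ^ 2 = -2) : δ ≠ 0 := by
  rintro rfl
  norm_num at hδ

theorem onCurveAtInfty_basePoint (hδ : δ ^ 2 = -2) :
    OnCurveAtInfty 2 (X ^ 12) (basePoint δ) := by
  refine onCurveAtInfty_mul_of_sq_eq (P := (X⁻¹ ^ 6, -2 * X⁻¹ ^ 18)) (C_sq_eq_neg_two hδ) ?_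
  dsimp only
  rw [show (X : RatFunc F) ^ 12 = (X⁻¹ ^ 12)⁻¹ by simp]
  have hX : (X⁻¹ : RatFunc F) ≠ 0 := inv_ne_zero X_ne_zero
  generalize (X⁻¹ : RatFunc F) = y at hX ⊢
  field_simp
  ring

variable [DecidableEq (RatFunc F)]

theorem inftyValuation_inv_X_lt_one : inftyValuation F X⁻¹ < 1 := by
  rw [map_inv₀, inftyValuation.X, ← WithZero.exp_neg, ← WithZero.exp_zero, WithZero.exp_lt_exp]
  norm_num

theorem inftyValuation_inv_X_pos : 0 < inftyValuation F X⁻¹ :=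
  zero_lt_iff.mpr ((inftyValuation F).ne_zero_iff.mpr (inv_ne_zero X_ne_zero))

theorem inftyValuation_X_pow_mul_inv_X_pow (n : ℕ) :
    inftyValuation F (X ^ n) * inftyValuation F X⁻¹ ^ n = 1 := by
  rw [← map_pow, ← map_mul, ← mul_pow, mul_inv_cancel₀ X_ne_zero, one_pow, map_one]

theorem inftyValuation_C_sub_C {c₁ c₂ : F} (h : c₁ ≠ c₂) : inftyValuation F (C c₁ - C c₂) = 1 := by
  rw [← map_sub]
  exact inftyValuation.C F (sub_ne_zero.mpr h)

theorem inv_X_mem_inftyValuation_integer : X⁻¹ ∈ (inftyValuation F).integer :=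
  inftyValuation_inv_X_lt_one.le

theorem C_mem_inftyValuation_integer (c : F) : C c ∈ (inftyValuation F).integer := by
  rw [Valuation.mem_integer_iff]
  simpa [algebraMap_eq_C] using
    Valuation.IsTrivialOn.valuation_algebraMap_le_one (inftyValuation F) c

theorem inv_mem_inftyValuation_integer {x : RatFunc F} (hx : inftyValuation F x = 1) :
    x⁻¹ ∈ (inftyValuation F).integer := by
  rw [Valuation.mem_integer_iff, map_inv₀, hx, inv_one]

theorem inftyValuation_mul_le {x y : RatFunc F} (hy : y ∈ (inftyValuation F).integer) :
    inftyValuation F (x * y) ≤ inftyValuation F x := by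
  rw [map_mul]; exact mul_le_of_le_one_right' hy

theorem inftyValuation_one_add_mul_eq_one {x y : RatFunc F} (hx : x ∈ (inftyValuation F).integer)
    (hy : inftyValuation F y < 1) : inftyValuation F (1 + x * y) = 1 :=
  (inftyValuation F).map_one_add_of_lt (by rw [map_mul]; exact Right.mul_lt_one_of_le_of_lt hx hy)

theorem inftyValuation_inv_X_pow_twelve_lt_one : inftyValuation F (X⁻¹ ^ 12) < 1 :=
  map_pow (inftyValuation F) X⁻¹ 12 ▸ pow_lt_one₀ zero_le inftyValuation_inv_X_lt_one (by norm_num)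

theorem inftyValuation_one_sub_four_mul_inv_X_pow :
    inftyValuation F (1 - 4 * X⁻¹ ^ 12) = 1 := by
  rw [sub_eq_add_neg, ← neg_mul]
  exact inftyValuation_one_add_mul_eq_one (by apply_rules [neg_mem, ofNat_mem])
    inftyValuation_inv_X_pow_twelve_lt_one

theorem inftyValuation_one_add_sixteen_mul_inv_X_pow :
    inftyValuation F (1 + 16 * (1 - X⁻¹ ^ 12) * X⁻¹ ^ 12) = 1 :=
  inftyValuation_one_add_mul_eq_one
    (by apply_rules [mul_mem, sub_mem, one_mem, ofNat_mem, pow_mem,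
      inv_X_mem_inftyValuation_integer])
    inftyValuation_inv_X_pow_twelve_lt_one

theorem hasLeadingCoeff_basePoint :
    HasLeadingCoeff (inftyValuation F) X⁻¹ 6 (C δ) (basePoint δ) := by
  constructor
  · rw [basePoint, sub_self, map_zero]
    exact pow_pos inftyValuation_inv_X_pos 6
  · rw [basePoint, show C δ * (-2 * X⁻¹ ^ 18) = X⁻¹ ^ 18 * (C δ * -2) by ring, ← map_pow]
    exact inftyValuation_mul_le
      (by apply_rules [mul_mem, neg_mem, ofNat_mem, C_mem_inftyValuation_integer])

theorem onCurveAtInfty_doubleBasePoint (hδ : δ ^ 2 = -2) :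
    OnCurveAtInfty 2 (X ^ 12) (doubleBasePoint δ) := by
  have hp : (1 - 4 * X⁻¹ ^ 12 : RatFunc F) ≠ 0 := by
    rw [← (inftyValuation F).ne_zero_iff, inftyValuation_one_sub_four_mul_inv_X_pow]
    exact one_ne_zero
  have hq : (1 + 16 * (1 - X⁻¹ ^ 12) * X⁻¹ ^ 12 : RatFunc F) ≠ 0 := by
    rw [← (inftyValuation F).ne_zero_iff, inftyValuation_one_add_sixteen_mul_inv_X_pow]
    exact one_ne_zero
  refine onCurveAtInfty_mul_of_sq_eq (P := (_, _)) (C_sq_eq_neg_two hδ) ?_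
  dsimp only
  rw [show (X : RatFunc F) ^ 12 = (X⁻¹ ^ 12)⁻¹ by simp]
  have hX : (X⁻¹ : RatFunc F) ≠ 0 := inv_ne_zero X_ne_zero
  generalize (X⁻¹ : RatFunc F) = y at hp hq hX ⊢
  generalize hp' : 1 - 4 * y ^ 12 = p at hp ⊢
  generalize hq' : 1 + 16 * (1 - y ^ 12) * y ^ 12 = q at hq ⊢
  field_simp
  subst hp' hq'
  ring

theorem hasLeadingCoeff_doubleBasePoint :
    HasLeadingCoeff (inftyValuation F) X⁻¹ 6 (C (2 * δ)) (doubleBasePoint δ) := by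
  have hz := inftyValuation_inv_X_pow_twelve_lt_one (F := F)
  have hp := inftyValuation_one_sub_four_mul_inv_X_pow (F := F)
  have hq := inftyValuation_one_add_sixteen_mul_inv_X_pow (F := F)
  set z : RatFunc F := X⁻¹ ^ 12
  have hq0 : 1 + 16 * (1 - z) * z ≠ 0 := (inftyValuation F).ne_zero_iff.mp (by simp [hq])
  have hzi : z ∈ (inftyValuation F).integer := hz.le
  have hpi := inv_mem_inftyValuation_integer hp
  have hqi := inv_mem_inftyValuation_integer hq
  have hCi := C_mem_inftyValuation_integer δ
  constructor
  · rw [doubleBasePoint, show C δ * (2 * X⁻¹ ^ 6 * (1 - 4 * z) / (1 + 16 * (1 - z) * z)) -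
        C (2 * δ) * X⁻¹ ^ 6 = X⁻¹ ^ 6 * z * (C δ * 2 * (16 * z - 20) * (1 + 16 * (1 - z) * z)⁻¹) by
      rw [map_mul, map_ofNat, div_eq_mul_inv]
      linear_combination (2 * C δ * X⁻¹ ^ 6) * inv_mul_cancel₀ hq0, mul_assoc, map_mul, map_pow]
    exact mul_lt_of_lt_one_right (pow_pos inftyValuation_inv_X_pos 6)
      ((inftyValuation_mul_le (by apply_rules [mul_mem, sub_mem, ofNat_mem])).trans_lt hz)
  · rw [doubleBasePoint, show C δ * (-16 * X⁻¹ ^ 18 / ((1 - 4 * z) * (1 + 16 * (1 - z) * z))) =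
        X⁻¹ ^ 18 * (C δ * -16 * (1 - 4 * z)⁻¹ * (1 + 16 * (1 - z) * z)⁻¹) by
      field_simp, ← map_pow]
    exact inftyValuation_mul_le (by apply_rules [mul_mem, neg_mem, ofNat_mem])

theorem chartAdd_basePoint_spec (hδ : δ ^ 2 = -2) {c : F} (hc : c ≠ δ) {P : RatFunc F × RatFunc F}
    (hP : OnCurveAtInfty 2 (X ^ 12) P) (hPc : HasLeadingCoeff (inftyValuation F) X⁻¹ 6 (C c) P) :
    OnCurveAtInfty 2 (X ^ 12) (chartAdd 2 (X ^ 12) (basePoint δ) P) ∧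
      HasLeadingCoeff (inftyValuation F) X⁻¹ 6 (C (δ + c))
        (chartAdd 2 (X ^ 12) (basePoint δ) P) := by
  have hA := hasLeadingCoeff_basePoint (δ := δ)
  have ha : inftyValuation F 2 ≤ 1 := ofNat_mem (inftyValuation F).integer 2
  have hb := (inftyValuation_X_pow_mul_inv_X_pow (F := F) 12).le
  have hcδ := inftyValuation_C_sub_C hc
  refine ⟨hA.onCurveAtInfty_chartAdd (by norm_num) inftyValuation_inv_X_lt_one ha hb hPc hcδ
    (onCurveAtInfty_basePoint hδ) hP, ?_⟩
  rw [map_add]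
  exact hA.chartAdd (by norm_num) inftyValuation_inv_X_lt_one ha hb hPc
    (C_mem_inftyValuation_integer δ) (C_mem_inftyValuation_integer c) hcδ

variable [CharZero F]

theorem multipleBasePoint_spec (hδ : δ ^ 2 = -2) (n : ℕ) :
    OnCurveAtInfty 2 (X ^ 12) (multipleBasePoint δ n) ∧
      HasLeadingCoeff (inftyValuation F) X⁻¹ 6 (C ((n + 2) * δ)) (multipleBasePoint δ n) := by
  have hδ0 := ne_zero_of_sq_eq_neg_two hδ
  induction n with
  | zero =>
    exact ⟨onCurveAtInfty_doubleBasePoint hδ, by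
      simpa [multipleBasePoint] using hasLeadingCoeff_doubleBasePoint (δ := δ)⟩
  | succ n ih =>
    have hc : ((n : F) + 2) * δ ≠ δ := fun h ↦ Nat.cast_add_one_ne_zero (R := F) n
      ((mul_eq_zero.mp (by linear_combination h)).resolve_right hδ0)
    rw [multipleBasePoint, show ((n + 1 : ℕ) + 2) * δ = δ + (n + 2) * δ by push_cast; ring]
    exact chartAdd_basePoint_spec hδ hc ih.1 ih.2

theorem periodTwoSections_X_pow_twelve_infinite (hδ : δ ^ 2 = -2) :
    (periodTwoSections (X ^ 12 : RatFunc F)).Infinite := by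
  have hδ0 := ne_zero_of_sq_eq_neg_two hδ
  have spec := multipleBasePoint_spec hδ
  refine Set.infinite_of_injective_forall_mem
    (f := fun n ↦ chartTriple (X ^ 12) (multipleBasePoint δ n)) (fun m n h ↦ ?_) fun n ↦
      chartTriple_mem_periodTwoSections (spec n).1
        ((spec n).2.fst_ne_zero (inftyValuation.C F (mul_ne_zero (by norm_cast) hδ0)))
  by_contra hmn
  refine (spec m).2.fst_ne (spec n).2 (inftyValuation_C_sub_C fun h' ↦ hmn ?_)
    (fst_eq_of_chartTriple_eq h)
  exact_mod_cast add_right_cancel (mul_right_cancel₀ hδ0 h').symm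

end

end PeriodTwoMultiplier

/-- **There are infinitely many 12th-root multiplier sections of period 2.**
The set of triples `(a, b, z₁) ∈ ℂ(w)³` such that, with `z₂ := z₁³ + a·z₁ + b`,
one has `z₂ ≠ z₁`, `z₂³ + a·z₂ + b = z₁`, and `(3z₁² + a)(3z₂² + a) = w¹²`,
is infinite. -/
theorem twelfth_root_multiplier_sections_period_two_infinite :
    {p : RatFunc ℂ × RatFunc ℂ × RatFunc ℂ |
        p.2.2 ^ 3 + p.1 * p.2.2 + p.2.1 ≠ p.2.2 ∧
        (p.2.2 ^ 3 + p.1 * p.2.2 + p.2.1) ^ 3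
            + p.1 * (p.2.2 ^ 3 + p.1 * p.2.2 + p.2.1) + p.2.1 = p.2.2 ∧
        (3 * p.2.2 ^ 2 + p.1) * (3 * (p.2.2 ^ 3 + p.1 * p.2.2 + p.2.1) ^ 2 + p.1)
            = RatFunc.X ^ 12}.Infinite := by
  classical
  obtain ⟨δ, hδ⟩ := IsAlgClosed.exists_pow_nat_eq (-2 : ℂ) two_pos
  exact PeriodTwoMultiplier.periodTwoSections_X_pow_twelve_infinite hδ
end

section
/- Let F be a field of characteristic zero, let s ∈ F satisfy s² = −2, and let λ, d, e ∈ F with d ≠ 0, e ≠ 0, and e² = d³ − 4d² + 4λd. Define u := e²/(4d²), v := e(d² − 4λ)/(8d²), a := (4u² − 4u + 1 − λ)/(6u), b := s(8u² + 16u + λ − 1)v/(54u²), and z := −s(d² − 6d + 8λ)/(6e). Then, with z' := z³ + a·z + b, one has z'³ + a·z' + b = z and (3z² + a)(3z'² + a) = λ. (These are the explicit birational formulas identifying X₁(2) with the elliptic curve E₁ : e² = d(d² − 4d + 4λ): a point of E₁ yields a cubic z³ + az + b with a marked point z of period dividing 2 and multiplier λ.) -/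
/-!
A cubic `z³ + az + b` swaps `z` and `w` as soon as `a = -(z² + zw + w² + 1)` and
`b = (z + w)(1 + zw)`, and the multiplier of that 2-cycle is then
`1 - (z - w)²(1 + zw + 2(z + w)²)`. For a point of `E₁` put `r = d - 2` and `k = se/(24du)`;
since `e² = 4d²u` and `s² = -2`, one has `72uk² = -1` and `λ = (r + 2)u - r²/4 + 1`.
In these coordinates `z = k(r - 8u)`, and with `w = k(r + 4u)` the given `a` and `b` are exactly
the two expressions above, while the multiplier formula evaluates to `λ`.
-/

section CubicTwoCycle

variable {R : Type*} [CommRing R] {a b z w : R}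

theorem cubic_two_cycle (ha : a = -(z ^ 2 + z * w + w ^ 2 + 1)) (hb : b = (z + w) * (1 + z * w)) :
    z ^ 3 + a * z + b = w ∧ w ^ 3 + a * w + b = z := by
  subst ha hb
  constructor <;> ring

theorem cubic_two_cycle_multiplier (ha : a = -(z ^ 2 + z * w + w ^ 2 + 1)) :
    (3 * z ^ 2 + a) * (3 * w ^ 2 + a) = 1 - (z - w) ^ 2 * (1 + z * w + 2 * (z + w) ^ 2) := by
  subst ha
  ring

end CubicTwoCycle

namespace X1Two

variable {F : Type*} [Field F] [CharZero F] {lam u r k z w : F}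

theorem multiplier_eq (hk : 72 * u * k ^ 2 = -1) (hlam : lam = (r + 2) * u - r ^ 2 / 4 + 1)
    (hz : z = k * (r - 8 * u)) (hw : w = k * (r + 4 * u)) :
    (z - w) ^ 2 * (1 + z * w + 2 * (z + w) ^ 2) = 1 - lam := by
  subst hz hw
  linear_combination (2 * u + r * (r - 4 * u) * (72 * u * k ^ 2 - 1) / 4) * hk + hlam

theorem a_eq (hu : u ≠ 0) (hk : 72 * u * k ^ 2 = -1) (hlam : lam = (r + 2) * u - r ^ 2 / 4 + 1)
    (hz : z = k * (r - 8 * u)) (hw : w = k * (r + 4 * u)) :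
    (4 * u ^ 2 - 4 * u + 1 - lam) / (6 * u) = -(z ^ 2 + z * w + w ^ 2 + 1) := by
  subst hz hw
  rw [div_eq_iff (by simpa using hu)]
  linear_combination (r ^ 2 - 4 * r * u + 16 * u ^ 2) / 4 * hk - hlam

theorem b_eq (hu : u ≠ 0) (hk : 72 * u * k ^ 2 = -1) (hlam : lam = (r + 2) * u - r ^ 2 / 4 + 1)
    (hz : z = k * (r - 8 * u)) (hw : w = k * (r + 4 * u)) :
    6 * u * k * (r - 2 * u) * (8 * u ^ 2 + 16 * u + lam - 1) / (54 * u ^ 2) =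
      (z + w) * (1 + z * w) := by
  subst hz hw
  rw [div_eq_iff (by simpa using hu)]
  linear_combination
    -(r ^ 2 - 4 * r * u - 32 * u ^ 2) / 4 * (6 * u * k * (r - 2 * u)) * hk +
      6 * u * k * (r - 2 * u) * hlam

end X1Two

namespace E1

variable {F : Type*} [Field F] {s lam d e u v z : F}

theorem four_mul_d_mul_u (hd : d ≠ 0) (he : e ^ 2 = d ^ 3 - 4 * d ^ 2 + 4 * lam * d)
    (he2 : e ^ 2 = 4 * d ^ 2 * u) : 4 * d * u = d ^ 2 - 4 * d + 4 * lam :=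
  mul_left_cancel₀ hd (by linear_combination he - he2)

variable [CharZero F]

theorem scale_sq (hs : s ^ 2 = -2) (hd : d ≠ 0) (hu : u ≠ 0) (he2 : e ^ 2 = 4 * d ^ 2 * u) :
    72 * u * (s * e / (24 * d * u)) ^ 2 = -1 := by
  field_simp
  linear_combination 72 * e ^ 2 * hs - 144 * he2

theorem z_eq (hd : d ≠ 0) (he0 : e ≠ 0) (hu : u ≠ 0) (he2 : e ^ 2 = 4 * d ^ 2 * u)
    (hdu : 4 * d * u = d ^ 2 - 4 * d + 4 * lam)
    (hz : z = -(s * (d ^ 2 - 6 * d + 8 * lam)) / (6 * e)) :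
    z = s * e / (24 * d * u) * (d - 2 - 8 * u) := by
  subst hz
  field_simp
  linear_combination -6 * s * (d - 2 - 8 * u) * he2 + 48 * s * d * u * hdu

theorem s_mul_v_eq (hd : d ≠ 0) (hu : u ≠ 0) (hdu : 4 * d * u = d ^ 2 - 4 * d + 4 * lam)
    (hv : v = e * (d ^ 2 - 4 * lam) / (8 * d ^ 2)) :
    s * v = 6 * u * (s * e / (24 * d * u)) * (d - 2 - 2 * u) := by
  subst hv
  field_simp
  linear_combination 24 * s * e * hdu

end E1

/-- **Explicit identification of `X₁(2)` with the elliptic curve `E₁`.**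
Over a field `F` of characteristic zero with `s² = −2`, given a point `(d, e)` of
`E₁ : e² = d³ − 4d² + 4λd` with `d ≠ 0`, `e ≠ 0`, the formulas
`u := e²/(4d²)`, `v := e(d² − 4λ)/(8d²)`, `a := (4u² − 4u + 1 − λ)/(6u)`,
`b := s(8u² + 16u + λ − 1)v/(54u²)`, `z := −s(d² − 6d + 8λ)/(6e)` produce a cubic
`z³ + az + b` with a marked point `z` of period dividing 2 and multiplier `λ`. -/
theorem explicit_formulas_X1_two
    {F : Type*} [Field F] [CharZero F]
    (s : F) (hs : s ^ 2 = -2)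
    (lam d e : F) (hd : d ≠ 0) (he0 : e ≠ 0)
    (he : e ^ 2 = d ^ 3 - 4 * d ^ 2 + 4 * lam * d)
    (u v a b z : F)
    (hu : u = e ^ 2 / (4 * d ^ 2))
    (hv : v = e * (d ^ 2 - 4 * lam) / (8 * d ^ 2))
    (ha : a = (4 * u ^ 2 - 4 * u + 1 - lam) / (6 * u))
    (hb : b = s * (8 * u ^ 2 + 16 * u + lam - 1) * v / (54 * u ^ 2))
    (hz : z = -(s * (d ^ 2 - 6 * d + 8 * lam)) / (6 * e)) :
    (z ^ 3 + a * z + b) ^ 3 + a * (z ^ 3 + a * z + b) + b = z ∧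
    (3 * z ^ 2 + a) * (3 * (z ^ 3 + a * z + b) ^ 2 + a) = lam := by
  have hu0 : u ≠ 0 := by rw [hu]; simp [hd, he0]
  have he2 : e ^ 2 = 4 * d ^ 2 * u := by rw [hu]; field_simp
  have hdu := E1.four_mul_d_mul_u hd he he2
  set k := s * e / (24 * d * u)
  set w := k * (d - 2 + 4 * u)
  have hk : 72 * u * k ^ 2 = -1 := E1.scale_sq hs hd hu0 he2
  have hlam : lam = (d - 2 + 2) * u - (d - 2) ^ 2 / 4 + 1 := by linear_combination -hdu / 4
  have hz' : z = k * (d - 2 - 8 * u) := E1.z_eq hd he0 hu0 he2 hdu hz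
  have ha' : a = -(z ^ 2 + z * w + w ^ 2 + 1) := ha.trans (X1Two.a_eq hu0 hk hlam hz' rfl)
  have hb' : b = (z + w) * (1 + z * w) := by
    rw [hb, mul_right_comm, E1.s_mul_v_eq hd hu0 hdu hv, X1Two.b_eq hu0 hk hlam hz' rfl]
  obtain ⟨hzw, hwz⟩ := cubic_two_cycle ha' hb'
  rw [hzw, cubic_two_cycle_multiplier ha', X1Two.multiplier_eq hk hlam hz' rfl, sub_sub_cancel]
  exact ⟨hwz, rfl⟩
end

section
/- Let F be a field of characteristic zero, let d ≥ 2 be an integer, and let f, g ∈ F[X] be polynomials of degree d such that the coefficient of X^d in each of f and g is nonzero, the coefficient of X^{d−1} in each is zero, and the constant coefficient of each equals 1 (i.e. f and g have the normal form a_d X^d + a_{d−2}X^{d−2} + ⋯ + a₁X + 1). If α, β ∈ F with α ≠ 0 satisfy g(α·x + β) = α·f(x) + β for all x ∈ F (i.e. g∘φ = φ∘f for the affine map φ(x) = αx + β), then α = 1, β = 0, and f = g. (Two polynomials in this normal form are affine-conjugate only if they are equal.) -/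
open Polynomial

/-! Write `d = n + 1`. Comparing coefficients of `Xⁿ` in `g ∘ (αX + β) = α f + β` gives
`αⁿ (g_n + d g_d β) = α f_n`; both `n`-th coefficients vanish, so `d g_d αⁿ β = 0` and `β = 0`.
Evaluating at `0` then gives `1 = α`, and `f = g` follows. -/

namespace Polynomial

variable {R : Type*}

theorem hasseDeriv_eq_of_natDegree_le_succ [Semiring R] {p : R[X]} {n : ℕ}
    (hp : p.natDegree ≤ n + 1) :
    hasseDeriv n p = C (p.coeff n) + C ((n + 1) * p.coeff (n + 1)) * X := by
  ext k
  rw [hasseDeriv_coeff]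
  rcases k with _ | _ | k
  · simp
  · simp [add_comm 1 n]
  · rw [coeff_eq_zero_of_natDegree_lt (by omega)]
    simp [coeff_one]

theorem taylor_coeff_of_natDegree_le_succ [Semiring R] {p : R[X]} {n : ℕ}
    (hp : p.natDegree ≤ n + 1) (b : R) :
    (taylor b p).coeff n = p.coeff n + (n + 1) * p.coeff (n + 1) * b := by
  simp only [taylor_coeff, hasseDeriv_eq_of_natDegree_le_succ hp, eval_add, eval_C_mul, eval_C,
    eval_X]

theorem comp_C_mul_X_add_C_eq_taylor_comp [CommSemiring R] (p : R[X]) (a b : R) :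
    p.comp (C a * X + C b) = (taylor b p).comp (C a * X) := by
  rw [taylor_apply, comp_assoc, add_comp, X_comp, C_comp]

theorem coeff_comp_C_mul_X_add_C_of_natDegree_le_succ [CommSemiring R] {p : R[X]} {n : ℕ}
    (hp : p.natDegree ≤ n + 1) (a b : R) :
    (p.comp (C a * X + C b)).coeff n = (p.coeff n + (n + 1) * p.coeff (n + 1) * b) * a ^ n := by
  rw [comp_C_mul_X_add_C_eq_taylor_comp, comp_C_mul_X_coeff,
    taylor_coeff_of_natDegree_le_succ hp]

end Polynomial

theorem normal_form_affine_conjugate_iff_equal_general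
    {F : Type*} [Field F] [CharZero F] (d : ℕ) (hd : 2 ≤ d)
    (f g : F[X])
    (hgdeg : g.natDegree = d)
    (hglead : g.coeff d ≠ 0)
    (hfsub : f.coeff (d - 1) = 0) (hgsub : g.coeff (d - 1) = 0)
    (hfconst : f.coeff 0 = 1) (hgconst : g.coeff 0 = 1)
    (α β : F) (hα : α ≠ 0)
    (hconj : ∀ x : F, g.eval (α * x + β) = α * f.eval x + β) :
    α = 1 ∧ β = 0 ∧ f = g := by
  obtain ⟨n, rfl⟩ : ∃ n, d = n + 1 := ⟨d - 1, by omega⟩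
  rw [Nat.add_sub_cancel] at hfsub hgsub
  have hcomp : g.comp (C α * X + C β) = C α * f + C β :=
    Polynomial.funext fun x ↦ by simp [hconj]
  have hsub : ((n + 1) * g.coeff (n + 1) * β) * α ^ n = 0 := by
    simpa [coeff_comp_C_mul_X_add_C_of_natDegree_le_succ hgdeg.le, coeff_C, hgsub, hfsub,
      show n ≠ 0 by omega] using congrArg (coeff · n) hcomp
  have hβ : β = 0 := by
    simpa [hα, hglead, Nat.cast_add_one_ne_zero] using hsub
  have hα1 : α = 1 := by
    simpa [hβ, ← coeff_zero_eq_eval_zero, hfconst, hgconst, eq_comm] using hconj 0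
  subst hα1 hβ
  exact ⟨rfl, rfl, (Polynomial.funext fun x ↦ by simpa using hconj x).symm⟩

/-- **Rigidity of the normal form `a_d X^d + a_{d−2}X^{d−2} + ⋯ + a₁X + 1`.**
Over a field `F` of characteristic zero, if `f` and `g` are polynomials of degree
`d ≥ 2` with nonzero leading coefficient, vanishing coefficient in degree `d − 1`,
and constant term `1`, and if `g(αx + β) = α·f(x) + β` for all `x ∈ F` with `α ≠ 0`,
then `α = 1`, `β = 0`, and `f = g`. -/
theorem normal_form_affine_conjugate_iff_equal
    {F : Type*} [Field F] [CharZero F] (d : ℕ) (hd : 2 ≤ d)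
    (f g : F[X])
    (hfdeg : f.natDegree = d) (hgdeg : g.natDegree = d)
    (hflead : f.coeff d ≠ 0) (hglead : g.coeff d ≠ 0)
    (hfsub : f.coeff (d - 1) = 0) (hgsub : g.coeff (d - 1) = 0)
    (hfconst : f.coeff 0 = 1) (hgconst : g.coeff 0 = 1)
    (α β : F) (hα : α ≠ 0)
    (hconj : ∀ x : F, g.eval (α * x + β) = α * f.eval x + β) :
    α = 1 ∧ β = 0 ∧ f = g :=
  normal_form_affine_conjugate_iff_equal_general d hd f g hgdeg hglead hfsub hgsub hfconst hgconst α
    β hα hconj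
end
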